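/- Let (Γ,μ) be a weighted graph satisfying the uniform mean exit time condition (E), and set F(R)=inf_{x∈Γ} E(x,R). Then F is superadditive, i.e. F(R+S) ≥ F(R)+F(S) for all R,S∈ℕ with R>S>0, and consequently F(L·R) ≥ L·F(R) for all L,R∈ℕ. -/

import Mathlib

open Classical

noncomputable section

/-- A weighted graph: symmetric nonnegative edge weights, zero on the diagonal,
positive exactly on edges, with finitely many neighbours at each vertex. -/
structure WeightedGraph (V : Type*) where
  w : V → V → ℝ
  w_symm : ∀ x y, w x y = w y x
  w_nonneg : ∀ x y, 0 ≤ w x y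
  w_irrefl : ∀ x, w x x = 0
  locFin : ∀ x, {y | 0 < w x y}.Finite

/-- A space-time scale function is proper. -/
def properF (F : ℕ → ℝ) : Prop :=
  StrictMono F ∧
  (∃ D : ℝ, 0 < D ∧ ∀ R : ℕ, F (2 * R) ≤ D * F R) ∧
  (∀ R S : ℕ, F R + F S ≤ F (R + S)) ∧
  (∃ (A : ℕ) (B : ℝ), 1 < A ∧ 1 < B ∧ ∀ R : ℕ, B * F R ≤ F (A * R)) ∧
  (∃ c : ℝ, 0 < c ∧ ∀ R : ℕ, c * (R : ℝ) ^ 2 ≤ F R)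

/-- A proper scale function satisfying the strong anti-doubling property `B_F > A_F`. -/
def veryProperF (F : ℕ → ℝ) : Prop :=
  properF F ∧
  (∃ (A : ℕ) (B : ℝ), 1 < A ∧ (A : ℝ) < B ∧ ∀ R : ℕ, B * F R ≤ F (A * R))

/-- The (generalized) inverse of a scale function. -/
def finvF (F : ℕ → ℝ) (t : ℝ) : ℕ := sInf {R : ℕ | t ≤ F R}

/-- The sub-Gaussian kernel `k(n,R)`: the maximal integer `k ≥ 1` with
`n/k ≤ F(⌊R/k⌋)`, and `0` if there is none. -/
def kkerF (F : ℕ → ℝ) (n R : ℕ) : ℕ :=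
  sSup {k : ℕ | 1 ≤ k ∧ (n : ℝ) / (k : ℝ) ≤ F (R / k)}

namespace WeightedGraph

variable {V : Type*}

/-- The underlying simple graph. -/
def toSimpleGraph (G : WeightedGraph V) : SimpleGraph V where
  Adj x y := 0 < G.w x y
  symm := by
    constructor
    intro x y h
    show 0 < G.w y x
    rw [G.w_symm y x]
    exact h
  loopless := by
    constructor
    intro x h
    change 0 < G.w x x at h
    rw [G.w_irrefl x] at h
    exact lt_irrefl 0 h

/-- The graph (shortest path) distance. -/
def gdist (G : WeightedGraph V) (x y : V) : ℕ := G.toSimpleGraph.dist x y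

/-- The open metric ball `B(x,r) = {y : d(x,y) < r}`. -/
def ball (G : WeightedGraph V) (x : V) (r : ℝ) : Set V := {y | (G.gdist x y : ℝ) < r}

/-- The sphere `S(x,R) = {y : d(x,y) = R}`. -/
def sphere (G : WeightedGraph V) (x : V) (R : ℕ) : Set V := {y | G.gdist x y = R}

/-- The external boundary of a set. -/
def extBoundary (G : WeightedGraph V) (A : Set V) : Set V :=
  {y | y ∉ A ∧ ∃ x ∈ A, 0 < G.w x y}

/-- The vertex measure `μ(x) = Σ_{y ∼ x} μ_{xy}`. -/
def mu (G : WeightedGraph V) (x : V) : ℝ := ∑' y, G.w x y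

/-- The volume `V(x,r) = μ(B(x,r))`. -/
def vol (G : WeightedGraph V) (x : V) (r : ℝ) : ℝ := ∑' y : G.ball x r, G.mu y.1

/-- The volume of the annulus `v(x,s,r) = V(x,r) - V(x,s)`. -/
def annv (G : WeightedGraph V) (x : V) (s r : ℝ) : ℝ := G.vol x r - G.vol x s

/-- One-step transition probability `P(x,y) = μ_{xy}/μ(x)`. -/
def Pstep (G : WeightedGraph V) (x y : V) : ℝ := G.w x y / G.mu x

/-- `n`-step transition probability. -/
def Pn (G : WeightedGraph V) : ℕ → V → V → ℝ
  | 0, x, y => if x = y then 1 else 0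
  | n + 1, x, y => ∑' z, G.Pstep x z * Pn G n z y

/-- The heat kernel `p_n(x,y) = P_n(x,y)/μ(y)`. -/
def hk (G : WeightedGraph V) (n : ℕ) (x y : V) : ℝ := G.Pn n x y / G.mu y

/-- One step of the walk killed on exiting `A`. -/
def PstepA (G : WeightedGraph V) (A : Set V) (x y : V) : ℝ :=
  if x ∈ A ∧ y ∈ A then G.Pstep x y else 0

/-- `n`-step transition probability of the killed walk. -/
def PnA (G : WeightedGraph V) (A : Set V) : ℕ → V → V → ℝ
  | 0, x, y => if x = y ∧ x ∈ A then 1 else 0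
  | n + 1, x, y => ∑' z, G.PstepA A x z * PnA G A n z y

/-- The local Green kernel `g^A(y,z) = (Σ_k P_k^A(y,z))/μ(z)`. -/
def green (G : WeightedGraph V) (A : Set V) (y z : V) : ℝ :=
  (∑' k, G.PnA A k y z) / G.mu z

/-- The mean exit time `E_z(A) = Σ_{k≥0} P_z(T_A > k) = Σ_k Σ_{y} P_k^A(z,y)`. -/
def meanExit (G : WeightedGraph V) (A : Set V) (z : V) : ℝ :=
  ∑' (k : ℕ), ∑' (y : V), G.PnA A k z y

/-- `E(x,r)`: the mean exit time from the ball `B(x,r)` started at `x`. -/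
def mexit (G : WeightedGraph V) (x : V) (r : ℝ) : ℝ := G.meanExit (G.ball x r) x

/-- `e(x,t) = min{R ∈ ℕ : E(x,R) ≥ t}`, the inverse of the mean exit time. -/
def einv (G : WeightedGraph V) (x : V) (t : ℝ) : ℕ := sInf {R : ℕ | t ≤ G.mexit x R}

/-- `P(T_A < n)` for the walk started at `z`. -/
def exitProbLT (G : WeightedGraph V) (A : Set V) (z : V) (n : ℕ) : ℝ :=
  1 - ∑' y, G.PnA A (n - 1) z y

/-- The local sub-Gaussian kernel `k̲(x,n,R)`. -/
def lker (G : WeightedGraph V) (x : V) (n R : ℕ) : ℕ :=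
  sSup {k : ℕ | 1 ≤ k ∧ (n : ℝ) / (k : ℝ) ≤ ⨅ y : G.ball x R, G.mexit y.1 ((R / k : ℕ) : ℝ)}

/-- `u` is harmonic on `A`. -/
def Harmonic (G : WeightedGraph V) (A : Set V) (u : V → ℝ) : Prop :=
  ∀ x ∈ A, (∑' y, G.Pstep x y * u y) = u x

/-- The Dirichlet form (energy). -/
def dirichletEnergy (G : WeightedGraph V) (f : V → ℝ) : ℝ :=
  (1 / 2) * ∑' p : V × V, G.w p.1 p.2 * (f p.1 - f p.2) ^ 2

/-- The resistance between two disjoint sets. -/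
def resistance (G : WeightedGraph V) (A B : Set V) : ℝ :=
  (sInf (G.dirichletEnergy '' {f | (∀ x ∈ A, f x = 1) ∧ ∀ x ∈ B, f x = 0}))⁻¹

/-- The resistance of the annulus `ρ(x,s,r) = ρ(B(x,s), Γ∖B(x,r))`. -/
def rho (G : WeightedGraph V) (x : V) (s r : ℝ) : ℝ :=
  G.resistance (G.ball x s) (G.ball x r)ᶜ

/-- The kernel of the `(λ,m)`-resolvent `((λ+1)I - P)^{-m}`. -/
def resolventKer (G : WeightedGraph V) (lam : ℝ) (m : ℕ) (x y : V) : ℝ :=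
  (∑' k : ℕ, (Nat.choose (k + m - 1) k : ℝ) * (1 + lam) ^ (-((m : ℤ) + (k : ℤ))) * G.Pn k x y) /
    G.mu y

/-- `F(R) = inf_x E(x,R)`. -/
def Fm (G : WeightedGraph V) (R : ℕ) : ℝ := ⨅ x : V, G.mexit x R

/-- Condition `(p0)`: controlled weights. -/
def P0 (G : WeightedGraph V) (p0 : ℝ) : Prop :=
  ∀ x y : V, 0 < G.w x y → p0 ≤ G.w x y / G.mu x

/-- Condition `(VD)`: volume doubling. -/
def VD (G : WeightedGraph V) : Prop :=
  ∃ D : ℝ, 0 < D ∧ ∀ (x : V) (R : ℝ), 0 < R → G.vol x (2 * R) ≤ D * G.vol x R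

/-- Condition `(TC)`: the time comparison principle. -/
def TC (G : WeightedGraph V) : Prop :=
  ∃ C : ℝ, 1 < C ∧ ∀ (x : V) (R : ℝ), 0 < R → ∀ y ∈ G.ball x R,
    G.mexit x (2 * R) ≤ C * G.mexit y R

/-- Condition `(TD)`: time doubling. -/
def TD (G : WeightedGraph V) : Prop :=
  ∃ D : ℝ, 0 < D ∧ ∀ (x : V) (R : ℝ), 0 ≤ R → G.mexit x (2 * R) ≤ D * G.mexit x R

/-- Condition `(E)`: the mean exit time is uniform in the space. -/
def UniformE (G : WeightedGraph V) : Prop :=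
  ∃ C : ℝ, 1 < C ∧ ∀ (x y : V) (R : ℝ), 0 < R → G.mexit x R ≤ C * G.mexit y R

/-- The mean value inequality `(MV)`. -/
def MV (G : WeightedGraph V) : Prop :=
  ∃ C : ℝ, 0 < C ∧ ∀ (x : V) (R : ℝ) (u : V → ℝ), 0 < R → (∀ y, 0 ≤ u y) →
    G.Harmonic (G.ball x R) u →
    u x ≤ C / G.vol x R * ∑' y : G.ball x R, u y.1 * G.mu y.1

/-- The local diagonal upper estimate `(DUE)`. -/
def DUE (G : WeightedGraph V) : Prop :=
  ∃ C : ℝ, 0 < C ∧ ∀ (x : V) (n : ℕ), 0 < n →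
    G.hk n x x ≤ C / G.vol x (G.einv x n)

/-- The off-diagonal upper estimate `(UE)`. -/
def UE (G : WeightedGraph V) : Prop :=
  ∃ C β c : ℝ, 0 < C ∧ 1 < β ∧ 0 < c ∧ ∀ (x y : V) (n : ℕ), 0 < n →
    G.hk n x y ≤ C / G.vol x (G.einv x n) *
      Real.exp (-(c * (G.mexit x (G.gdist x y) / n) ^ ((1 : ℝ) / (β - 1))))

/-- A nonnegative Dirichlet solution of the heat equation `P^A u_n = u_{n+1}` up to time `N`. -/
def DirSol (G : WeightedGraph V) (A : Set V) (N : ℕ) (u : ℕ → V → ℝ) : Prop :=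
  (∀ n y, 0 ≤ u n y) ∧ ∀ n, n < N → ∀ z ∈ A, (∑' y, G.PstepA A z y * u n y) = u (n + 1) z

/-- The parabolic mean value inequality `(PMV)`. -/
def PMV (G : WeightedGraph V) : Prop :=
  ∃ c1 c2 C : ℝ, 0 ≤ c1 ∧ c1 < c2 ∧ 1 < C ∧
    ∀ (x : V) (R : ℝ) (u : ℕ → V → ℝ), 0 < R →
      G.DirSol (G.ball x R) ⌊c2 * G.mexit x R⌋₊ u →
      u ⌊c2 * G.mexit x R⌋₊ x ≤ C / (G.vol x R * G.mexit x R) *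
        ∑ i ∈ Finset.Icc ⌊c1 * G.mexit x R⌋₊ ⌊c2 * G.mexit x R⌋₊,
          ∑' y : G.ball x R, u i y.1 * G.mu y.1

/-- The skewed parabolic mean value inequality. -/
def SPMV (G : WeightedGraph V) : Prop :=
  ∃ c1 c2 C : ℝ, 0 < c1 ∧ c1 < c2 ∧ 1 ≤ C ∧
    ∀ (x : V) (R : ℝ) (y : V) (u : ℕ → V → ℝ), 0 < R → y ∈ G.ball x R →
      G.DirSol (G.ball x R) ⌊c2 * G.mexit x R⌋₊ u →
      u ⌊c2 * G.mexit x R⌋₊ x ≤ C / (G.vol y (2 * R) * G.mexit y (2 * R)) *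
        ∑ i ∈ Finset.Icc ⌊c1 * G.mexit x R⌋₊ ⌊c2 * G.mexit x R⌋₊,
          ∑' z : G.ball x R, u i z.1 * G.mu z.1

/-- The mean value property for Green kernels `(MVG)`. -/
def MVG (G : WeightedGraph V) : Prop :=
  ∃ C : ℝ, 1 < C ∧ ∀ (x : V) (R : ℝ) (y : V), 0 < R → 0 < G.gdist x y →
    G.green (G.ball x R) y x ≤ C / G.vol x (G.gdist x y) *
      ∑' z : G.ball x (G.gdist x y : ℝ), G.green (G.ball x R) y z.1 * G.mu z.1

/-- The Green kernel bound `(g01)`: `g^B(y,x) ≤ C·E(x,R)/V(x,d(x,y))`. -/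
def G01 (G : WeightedGraph V) : Prop :=
  ∃ C : ℝ, 1 < C ∧ ∀ (x : V) (R : ℝ) (y : V), 0 < R → 0 < G.gdist x y →
    G.green (G.ball x R) y x ≤ C * G.mexit x R / G.vol x (G.gdist x y)

/-- The elliptic Harnack inequality `(H)`. -/
def EH (G : WeightedGraph V) : Prop :=
  ∃ C : ℝ, 0 < C ∧ ∀ (x : V) (R : ℝ) (u : V → ℝ), 0 < R → (∀ y, 0 ≤ u y) →
    G.Harmonic (G.ball x (2 * R)) u → ∀ y ∈ G.ball x R, ∀ z ∈ G.ball x R, u y ≤ C * u z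

/-- The sub-Gaussian upper estimate `(UE_F)` with respect to `F`. -/
def UEF (G : WeightedGraph V) (F : ℕ → ℝ) : Prop :=
  ∃ C c : ℝ, 0 < C ∧ 0 < c ∧ ∀ (x y : V) (n : ℕ), 0 < n →
    G.hk n x y ≤ C / G.vol x (finvF F n) *
      Real.exp (-(c * (kkerF F n (G.gdist x y) : ℝ)))

/-- The sub-Gaussian lower estimate `(LE_F)` with respect to `F`. -/
def LEF (G : WeightedGraph V) (F : ℕ → ℝ) : Prop :=
  ∃ c C : ℝ, 0 < c ∧ 0 < C ∧ ∀ (x y : V) (n : ℕ), 0 < n →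
    c / G.vol x (finvF F n) * Real.exp (-(C * (kkerF F n (G.gdist x y) : ℝ))) ≤
      G.hk n x y + G.hk (n + 1) x y

/-- The `F`-parabolic Harnack inequality. -/
def PHF (G : WeightedGraph V) (F : ℕ → ℝ) : Prop :=
  ∀ c1 c2 c3 c4 η : ℝ, 0 < c1 → c1 < c2 → c2 < c3 → c3 < c4 → 0 < η → η < 1 →
    ∃ CH : ℝ, 0 < CH ∧ ∀ (x : V) (R k : ℕ) (u : ℕ → V → ℝ), 0 < R →
      (∀ n y, 0 ≤ u n y) →
      (∀ n : ℕ, k ≤ n → (n : ℝ) < (k : ℝ) + F ⌊c4 * (R : ℝ)⌋₊ → ∀ z ∈ G.ball x R,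
        (∑' y, G.Pstep z y * u n y) = u (n + 1) z) →
      ∀ (nm np : ℕ), ∀ xm ∈ G.ball x (η * R), ∀ xp ∈ G.ball x (η * R),
        (k : ℝ) + F ⌊c1 * (R : ℝ)⌋₊ ≤ (nm : ℝ) → (nm : ℝ) ≤ (k : ℝ) + F ⌊c2 * (R : ℝ)⌋₊ →
        (k : ℝ) + F ⌊c3 * (R : ℝ)⌋₊ ≤ (np : ℝ) → (np : ℝ) ≤ (k : ℝ) + F ⌊c4 * (R : ℝ)⌋₊ →
        (G.gdist xm xp : ℝ) ≤ (np : ℝ) - (nm : ℝ) →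
        u nm xm ≤ CH * (u np xp + u (np + 1) xp)

end WeightedGraph

/-!
Let `q_s(k, x)` be the probability that the walk from `x` is still in the finite set `s` at
time `k`. As the graph is connected and infinite, after some fixed number of steps the walk has
left `s` with probability bounded below, so `q_s` decays geometrically; hence
`E_s = ∑ₖ q_s(k, ·)` is finite and satisfies `E_s(x) = 1 + ∑_y P(x, y) E_s(y)` on `s`.

For `t = B(x, R) ⊆ s = B(x, R + S)` this makes `E_s - E_t - F(S)` superharmonic on `t`: a
neighbour `y ∉ t` of `t` has `B(y, S) ⊆ s`, so `E_s(y) ≥ E(y, S) ≥ F(S)`. Iterating the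
superharmonic inequality and letting `q_t → 0` gives a minimum principle, whence
`E(x, R + S) ≥ E(x, R) + F(S)`; take the infimum over `x`, and induct on `L`.
-/

namespace SimpleGraph

variable {V : Type*} {G : SimpleGraph V}

theorem Connected.finite_setOf_dist_le (hG : G.Connected)
    (hfin : ∀ v, (G.neighborSet v).Finite) (x : V) (n : ℕ) :
    {y | G.dist x y ≤ n}.Finite := by
  induction n with
  | zero =>
    refine (Set.finite_singleton x).subset fun y hy => ?_
    exact ((hG.dist_eq_zero_iff).1 (Nat.le_zero.1 hy)).symm
  | succ n ih =>
    refine (ih.union (ih.biUnion fun w _ => hfin w)).subset fun y hy => ?_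
    obtain ⟨p, hp⟩ := hG.exists_walk_length_eq_dist y x
    cases p with
    | nil => exact Or.inl (by simp)
    | cons hadj q =>
      refine Or.inr (Set.mem_biUnion (?_ : G.dist x _ ≤ n) hadj.symm)
      have hy : G.dist x y ≤ n + 1 := hy
      rw [Walk.length_cons, dist_comm] at hp
      rw [dist_comm]
      have := G.dist_le q
      omega

theorem Connected.dist_le_add_one_of_adj (hG : G.Connected) {x y z : V} (h : G.Adj y z) :
    G.dist x z ≤ G.dist x y + 1 :=
  hG.dist_triangle.trans_eq (by rw [dist_eq_one_iff_adj.2 h])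

end SimpleGraph

theorem summable_of_shift_le_mul {f : ℕ → ℝ} {B c : ℝ} {L : ℕ} (hf : ∀ n, 0 ≤ f n)
    (hB : ∀ n, f n ≤ B) (hc : c < 1) (h : ∀ n, f (n + L) ≤ c * f n) :
    Summable f := by
  refine summable_of_sum_range_le hf (c := L * B / (1 - c)) fun N => ?_
  have hmono : ∑ i ∈ Finset.range N, f i ≤ ∑ i ∈ Finset.range (L + N), f i :=
    Finset.sum_le_sum_of_subset_of_nonneg (Finset.range_subset_range.2 (by omega))
      fun i _ _ => hf i
  have hsplit :
      ∑ i ∈ Finset.range (L + N), f i ≤ L * B + c * ∑ i ∈ Finset.range N, f i := by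
    rw [Finset.sum_range_add, Finset.mul_sum]
    gcongr with i
    · simpa using Finset.sum_le_sum fun i (_ : i ∈ Finset.range L) => hB i
    · rw [add_comm]
      exact h i
  rw [le_div_iff₀ (by linarith)]
  linarith

namespace WeightedGraph

variable {V : Type*} (G : WeightedGraph V)

theorem summable_w (x : V) : Summable (G.w x) :=
  summable_of_ne_finset_zero (s := (G.locFin x).toFinset) fun y hy =>
    le_antisymm (by simpa using hy) (G.w_nonneg x y)

theorem mu_pos [Infinite V] (hconn : G.toSimpleGraph.Connected) (x : V) : 0 < G.mu x := by
  obtain ⟨y, hy⟩ := hconn.preconnected.exists_adj_of_nontrivial x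
  exact hy.trans_le ((G.summable_w x).le_tsum y fun z _ => G.w_nonneg x z)

theorem Pstep_nonneg (x y : V) : 0 ≤ G.Pstep x y :=
  div_nonneg (G.w_nonneg x y) (tsum_nonneg (G.w_nonneg x))

theorem adj_of_Pstep_ne_zero {x y : V} (h : G.Pstep x y ≠ 0) : G.toSimpleGraph.Adj x y :=
  (G.w_nonneg x y).lt_of_ne fun h0 => h (by rw [Pstep, ← h0, zero_div])

theorem Pstep_pos_of_adj {x y : V} (h : G.toSimpleGraph.Adj x y) : 0 < G.Pstep x y :=
  div_pos h (h.trans_le ((G.summable_w x).le_tsum y fun z _ => G.w_nonneg x z))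

theorem sum_Pstep_le_one (x : V) (t : Finset V) : ∑ y ∈ t, G.Pstep x y ≤ 1 := by
  simp only [Pstep, ← Finset.sum_div]
  exact div_le_one_of_le₀ ((G.summable_w x).sum_le_tsum t fun y _ => G.w_nonneg x y)
    (tsum_nonneg (G.w_nonneg x))

theorem sum_Pstep_eq_one [Infinite V] (hconn : G.toSimpleGraph.Connected) {x : V} {t : Finset V}
    (ht : ∀ y, G.toSimpleGraph.Adj x y → y ∈ t) : ∑ y ∈ t, G.Pstep x y = 1 := by
  have hmu : ∑ y ∈ t, G.w x y = G.mu x :=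
    (tsum_eq_sum fun y hy => le_antisymm (not_lt.1 fun h => hy (ht y h)) (G.w_nonneg x y)).symm
  simp only [Pstep, ← Finset.sum_div, hmu]
  exact div_self (G.mu_pos hconn x).ne'

theorem PstepA_nonneg (A : Set V) (x y : V) : 0 ≤ G.PstepA A x y := by
  unfold PstepA
  split_ifs
  exacts [G.Pstep_nonneg x y, le_rfl]

theorem PstepA_le_Pstep (A : Set V) (x y : V) : G.PstepA A x y ≤ G.Pstep x y := by
  unfold PstepA
  split_ifs
  exacts [le_rfl, G.Pstep_nonneg x y]

theorem PstepA_of_mem {A : Set V} {x y : V} (hx : x ∈ A) (hy : y ∈ A) :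
    G.PstepA A x y = G.Pstep x y :=
  if_pos ⟨hx, hy⟩

theorem PnA_nonneg (A : Set V) (k : ℕ) (x y : V) : 0 ≤ G.PnA A k x y := by
  induction k generalizing x with
  | zero => unfold PnA; split_ifs <;> norm_num
  | succ k ih => exact tsum_nonneg fun z => mul_nonneg (G.PstepA_nonneg A x z) (ih z)

theorem PnA_eq_zero_of_notMem_left {A : Set V} {x : V} (hx : x ∉ A) (k : ℕ) (y : V) :
    G.PnA A k x y = 0 := by
  cases k with
  | zero => exact if_neg fun h => hx h.2
  | succ k => simp [PnA, PstepA, hx]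

theorem PnA_eq_zero_of_notMem_right {A : Set V} {y : V} (hy : y ∉ A) (k : ℕ) (x : V) :
    G.PnA A k x y = 0 := by
  induction k generalizing x with
  | zero => exact if_neg fun h : x = y ∧ x ∈ A => hy (h.1 ▸ h.2)
  | succ k ih => simp [PnA, ih]

theorem meanExit_nonneg (A : Set V) (x : V) : 0 ≤ G.meanExit A x :=
  tsum_nonneg fun k => tsum_nonneg fun y => G.PnA_nonneg A k x y

theorem meanExit_eq_zero_of_notMem {A : Set V} {x : V} (hx : x ∉ A) : G.meanExit A x = 0 := by
  simp [meanExit, G.PnA_eq_zero_of_notMem_left hx]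

section

variable (s : Finset V)

theorem PnA_succ_eq_sum (k : ℕ) (x y : V) :
    G.PnA s (k + 1) x y = ∑ z ∈ s, G.PstepA s x z * G.PnA s k z y :=
  tsum_eq_sum fun z hz => by rw [G.PnA_eq_zero_of_notMem_left (by simpa using hz), mul_zero]

theorem PnA_add (a b : ℕ) (x y : V) :
    G.PnA s (a + b) x y = ∑ z ∈ s, G.PnA s a x z * G.PnA s b z y := by
  induction a generalizing x with
  | zero =>
    by_cases hx : x ∈ s
    · rw [zero_add, Finset.sum_eq_single_of_mem x hx]
      · simp [PnA, hx]
      · intro z _ hzx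
        simp [PnA, Ne.symm hzx]
    · simp [G.PnA_eq_zero_of_notMem_left (A := ↑s) (by simpa using hx)]
  | succ a ih =>
    rw [add_right_comm, PnA_succ_eq_sum]
    simp_rw [ih, PnA_succ_eq_sum, Finset.mul_sum, Finset.sum_mul, mul_assoc]
    exact Finset.sum_comm

/-- The probability `P_x(T_s > k)` that the walk started at `x` has not left `s` by time `k`. -/
def survival (k : ℕ) (x : V) : ℝ := ∑ y ∈ s, G.PnA s k x y

theorem survival_nonneg (k : ℕ) (x : V) : 0 ≤ G.survival s k x :=
  Finset.sum_nonneg fun y _ => G.PnA_nonneg s k x y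

theorem survival_eq_zero_of_notMem {x : V} (hx : x ∉ s) (k : ℕ) : G.survival s k x = 0 :=
  Finset.sum_eq_zero fun y _ => G.PnA_eq_zero_of_notMem_left (by simpa using hx) k y

theorem survival_zero {x : V} (hx : x ∈ s) : G.survival s 0 x = 1 := by
  rw [survival, Finset.sum_eq_single_of_mem x hx] <;> simp +contextual [PnA, hx, eq_comm]

theorem survival_succ (k : ℕ) (x : V) :
    G.survival s (k + 1) x = ∑ z ∈ s, G.PstepA s x z * G.survival s k z := by
  simp_rw [survival, PnA_succ_eq_sum, Finset.mul_sum]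
  exact Finset.sum_comm

theorem survival_add (a b : ℕ) (x : V) :
    G.survival s (a + b) x = ∑ z ∈ s, G.PnA s a x z * G.survival s b z := by
  simp_rw [survival, PnA_add, Finset.mul_sum]
  exact Finset.sum_comm

theorem survival_le_one (k : ℕ) (x : V) : G.survival s k x ≤ 1 := by
  induction k generalizing x with
  | zero =>
    by_cases hx : x ∈ s
    · rw [G.survival_zero s hx]
    · rw [G.survival_eq_zero_of_notMem s hx]
      exact zero_le_one
  | succ k ih =>
    calc G.survival s (k + 1) x ≤ ∑ z ∈ s, G.Pstep x z := by
          rw [survival_succ]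
          exact Finset.sum_le_sum fun z _ =>
            (mul_le_of_le_one_right (G.PstepA_nonneg s x z) (ih z)).trans (G.PstepA_le_Pstep s x z)
      _ ≤ 1 := G.sum_Pstep_le_one x s

theorem survival_succ_le (k : ℕ) (x : V) : G.survival s (k + 1) x ≤ G.survival s k x := by
  rw [survival_add, survival]
  exact Finset.sum_le_sum fun z _ => mul_le_of_le_one_right (G.PnA_nonneg s k x z)
    (G.survival_le_one s 1 z)

theorem survival_antitone (x : V) : Antitone (G.survival s · x) :=
  antitone_nat_of_succ_le fun k => G.survival_succ_le s k x

theorem survival_length_lt_one {x b : V} (p : G.toSimpleGraph.Walk x b) (hb : b ∉ s) :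
    G.survival s p.length x < 1 := by
  induction p with
  | nil => simp [G.survival_eq_zero_of_notMem s hb]
  | @cons x c b hxc p ih =>
    by_cases hx : x ∈ s
    swap
    · simp [G.survival_eq_zero_of_notMem s hx]
    set q := G.survival s p.length
    calc G.survival s (p.length + 1) x = ∑ z ∈ s, G.Pstep x z * q z := by
          rw [survival_succ]
          exact Finset.sum_congr rfl fun z hz => by
            rw [G.PstepA_of_mem (by simpa using hx) (by simpa using hz)]
      _ ≤ ∑ z ∈ insert c s, G.Pstep x z * q z :=
          Finset.sum_le_sum_of_subset_of_nonneg (Finset.subset_insert c s) fun z _ _ =>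
            mul_nonneg (G.Pstep_nonneg x z) (G.survival_nonneg s _ z)
      _ < ∑ z ∈ insert c s, G.Pstep x z :=
          Finset.sum_lt_sum
            (fun z _ => mul_le_of_le_one_right (G.Pstep_nonneg x z) (G.survival_le_one s _ z))
            ⟨c, Finset.mem_insert_self c s,
              mul_lt_of_lt_one_right (G.Pstep_pos_of_adj hxc) (ih hb)⟩
      _ ≤ 1 := G.sum_Pstep_le_one x _

open Filter in
theorem exists_survival_le [Infinite V] (hconn : G.toSimpleGraph.Connected) :
    ∃ (L : ℕ) (c : ℝ), c < 1 ∧ ∀ x, G.survival s L x ≤ c := by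
  have hev : ∀ x ∈ s, ∀ᶠ k in atTop, G.survival s k x < 1 := fun x _ => by
    obtain ⟨b, hb⟩ := Infinite.exists_notMem_finset s
    obtain ⟨p⟩ := hconn x b
    exact eventually_atTop.2 ⟨p.length, fun k hk =>
      (G.survival_antitone s x hk).trans_lt (G.survival_length_lt_one s p hb)⟩
  obtain ⟨L, hL⟩ := ((eventually_all_finset s).2 hev).exists
  rcases s.eq_empty_or_nonempty with rfl | hs
  · exact ⟨L, 0, zero_lt_one, fun x => (G.survival_eq_zero_of_notMem _ (by simp) L).le⟩
  obtain ⟨x₀, hx₀, hmax⟩ := s.exists_max_image (G.survival s L) hs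
  refine ⟨L, _, hL x₀ hx₀, fun x => ?_⟩
  by_cases hx : x ∈ s
  · exact hmax x hx
  · rw [G.survival_eq_zero_of_notMem s hx]
    exact G.survival_nonneg s L x₀

theorem summable_survival [Infinite V] (hconn : G.toSimpleGraph.Connected) (x : V) :
    Summable (G.survival s · x) := by
  obtain ⟨L, c, hc, hL⟩ := G.exists_survival_le s hconn
  refine summable_of_shift_le_mul (L := L) (G.survival_nonneg s · x) (G.survival_le_one s · x) hc
    fun k => ?_
  rw [survival_add, survival, Finset.mul_sum]
  exact Finset.sum_le_sum fun z _ => by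
    rw [mul_comm c]
    exact mul_le_mul_of_nonneg_left (hL z) (G.PnA_nonneg s k x z)

theorem meanExit_eq_tsum_survival (x : V) : G.meanExit s x = ∑' k, G.survival s k x :=
  tsum_congr fun k => tsum_eq_sum fun y hy =>
    G.PnA_eq_zero_of_notMem_right (by simpa using hy) k x

theorem meanExit_eq_one_add [Infinite V] (hconn : G.toSimpleGraph.Connected) {x : V}
    (hx : x ∈ s) : G.meanExit s x = 1 + ∑ y ∈ s, G.Pstep x y * G.meanExit s y := by
  simp_rw [meanExit_eq_tsum_survival]
  rw [(G.summable_survival s hconn x).tsum_eq_zero_add, G.survival_zero s hx]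
  simp_rw [survival_succ]
  rw [Summable.tsum_finsetSum fun z _ => (G.summable_survival s hconn z).mul_left _]
  refine congrArg _ (Finset.sum_congr rfl fun y hy => ?_)
  rw [tsum_mul_left, G.PstepA_of_mem (by simpa using hx) (by simpa using hy)]

theorem sum_PnA_mul_le_of_superharmonic {φ : V → ℝ}
    (hφ : ∀ x ∈ s, ∑ y ∈ s, G.Pstep x y * φ y ≤ φ x) (k : ℕ) {x : V} (hx : x ∈ s) :
    ∑ y ∈ s, G.PnA s k x y * φ y ≤ φ x := by
  induction k generalizing x with
  | zero =>
    rw [Finset.sum_eq_single_of_mem x hx]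
    · simp [PnA, hx]
    · intro y _ hyx
      simp [PnA, Ne.symm hyx]
  | succ k ih =>
    calc ∑ y ∈ s, G.PnA s (k + 1) x y * φ y
        = ∑ z ∈ s, G.Pstep x z * ∑ y ∈ s, G.PnA s k z y * φ y := by
          simp_rw [PnA_succ_eq_sum, Finset.sum_mul, Finset.mul_sum, mul_assoc]
          rw [Finset.sum_comm]
          exact Finset.sum_congr rfl fun z hz => by
            rw [G.PstepA_of_mem (by simpa using hx) (by simpa using hz)]
      _ ≤ ∑ z ∈ s, G.Pstep x z * φ z :=
          Finset.sum_le_sum fun z hz => mul_le_mul_of_nonneg_left (ih hz) (G.Pstep_nonneg x z)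
      _ ≤ φ x := hφ x hx

open Filter Topology in
theorem nonneg_of_superharmonic [Infinite V] (hconn : G.toSimpleGraph.Connected) {φ : V → ℝ}
    (hφ : ∀ x ∈ s, ∑ y ∈ s, G.Pstep x y * φ y ≤ φ x) {x : V} (hx : x ∈ s) :
    0 ≤ φ x := by
  obtain ⟨m, hm⟩ := (s.finite_toSet.image φ).bddBelow
  have hbound (k : ℕ) : m * G.survival s k x ≤ φ x :=
    calc m * G.survival s k x = ∑ y ∈ s, G.PnA s k x y * m := by
          rw [survival, Finset.mul_sum]
          exact Finset.sum_congr rfl fun y _ => mul_comm _ _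
      _ ≤ ∑ y ∈ s, G.PnA s k x y * φ y := Finset.sum_le_sum fun y hy =>
          mul_le_mul_of_nonneg_left (hm ⟨y, hy, rfl⟩) (G.PnA_nonneg s k x y)
      _ ≤ φ x := G.sum_PnA_mul_le_of_superharmonic s hφ k hx
  have hlim : Tendsto (fun k => m * G.survival s k x) atTop (𝓝 0) := by
    simpa using (G.summable_survival s hconn x).tendsto_atTop_zero.const_mul m
  exact le_of_tendsto' hlim hbound

end

theorem meanExit_add_le_of_subset [Infinite V] (hconn : G.toSimpleGraph.Connected)
    {s t : Finset V} (hts : t ⊆ s) (c : ℝ)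
    (hc : ∀ x ∈ t,
      c * (1 - ∑ y ∈ t, G.Pstep x y) ≤ ∑ y ∈ s \ t, G.Pstep x y * G.meanExit s y)
    {x : V} (hx : x ∈ t) : G.meanExit t x + c ≤ G.meanExit s x := by
  suffices 0 ≤ G.meanExit s x - G.meanExit t x - c by linarith
  refine G.nonneg_of_superharmonic t hconn (φ := fun z => G.meanExit s z - G.meanExit t z - c)
    (fun z hz => ?_) hx
  have hs := G.meanExit_eq_one_add s hconn (hts hz)
  have ht := G.meanExit_eq_one_add t hconn hz
  rw [← Finset.sum_sdiff hts] at hs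
  have := hc z hz
  simp only [mul_sub, Finset.sum_sub_distrib, ← Finset.sum_mul]
  linarith

theorem meanExit_mono [Infinite V] (hconn : G.toSimpleGraph.Connected) {A : Set V}
    {s : Finset V} (hAs : A ⊆ s) (x : V) : G.meanExit A x ≤ G.meanExit s x := by
  lift A to Finset V using s.finite_toSet.subset hAs
  by_cases hx : x ∈ A
  · simpa using G.meanExit_add_le_of_subset hconn (Finset.coe_subset.1 hAs) 0 (fun z _ => by
      simpa using Finset.sum_nonneg fun y _ =>
        mul_nonneg (G.Pstep_nonneg z y) (G.meanExit_nonneg s y)) hx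
  · rw [G.meanExit_eq_zero_of_notMem (by simpa using hx)]
    exact G.meanExit_nonneg s x

theorem ball_finite (hconn : G.toSimpleGraph.Connected) (x : V) (r : ℝ) :
    (G.ball x r).Finite :=
  (hconn.finite_setOf_dist_le G.locFin x ⌈r⌉₊).subset
    fun y (hy : (G.gdist x y : ℝ) < r) => by exact_mod_cast hy.le.trans (Nat.le_ceil r)

theorem mem_ball_nat {x y : V} {R : ℕ} : y ∈ G.ball x R ↔ G.gdist x y < R :=
  show (G.gdist x y : ℝ) < R ↔ _ from Nat.cast_lt

theorem Fm_le_mexit (R : ℕ) (x : V) : G.Fm R ≤ G.mexit x R :=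
  ciInf_le ⟨0, Set.forall_mem_range.2 fun y => G.meanExit_nonneg _ y⟩ x

theorem Fm_nonneg (R : ℕ) : 0 ≤ G.Fm R :=
  Real.iInf_nonneg fun x => G.meanExit_nonneg _ x

theorem Fm_zero [Nonempty V] : G.Fm 0 = 0 := by
  have hempty (x : V) : G.ball x 0 = ∅ :=
    Set.eq_empty_of_forall_notMem fun y (hy : (G.gdist x y : ℝ) < 0) =>
      (Nat.cast_nonneg _).not_gt hy
  simp [Fm, mexit, hempty, G.meanExit_eq_zero_of_notMem]

theorem mexit_add_Fm_le [Infinite V] (hconn : G.toSimpleGraph.Connected) (x : V) {R S : ℕ}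
    (hR : 0 < R) (hS : 0 < S) : G.mexit x R + G.Fm S ≤ G.mexit x ↑(R + S) := by
  set t := (G.ball_finite hconn x R).toFinset
  set s := (G.ball_finite hconn x ↑(R + S)).toFinset
  have hmem_t {y : V} : y ∈ t ↔ G.gdist x y < R :=
    (Set.Finite.mem_toFinset _).trans G.mem_ball_nat
  have hmem_s {y : V} : y ∈ s ↔ G.gdist x y < R + S :=
    (Set.Finite.mem_toFinset _).trans G.mem_ball_nat
  have hts : t ⊆ s := fun y hy => hmem_s.2 (by have := hmem_t.1 hy; omega)
  have hnbr {z y : V} (hz : z ∈ t) (hzy : G.toSimpleGraph.Adj z y) : G.gdist x y ≤ R := by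
    have : G.gdist x y ≤ G.gdist x z + 1 := hconn.dist_le_add_one_of_adj hzy
    have := hmem_t.1 hz
    omega
  have hc : ∀ z ∈ t, G.Fm S * (1 - ∑ y ∈ t, G.Pstep z y) ≤
      ∑ y ∈ s \ t, G.Pstep z y * G.meanExit s y := by
    intro z hz
    rw [← G.sum_Pstep_eq_one hconn (t := s) fun y hy => hmem_s.2 (by have := hnbr hz hy; omega),
      ← Finset.sum_sdiff hts, add_sub_cancel_right, Finset.mul_sum]
    refine Finset.sum_le_sum fun y _ => ?_
    rcases eq_or_ne (G.Pstep z y) 0 with h0 | h0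
    · simp [h0]
    rw [mul_comm]
    refine mul_le_mul_of_nonneg_left ((G.Fm_le_mexit S y).trans
      (G.meanExit_mono hconn (fun u hu => ?_) y)) (G.Pstep_nonneg z y)
    have := hnbr hz (G.adj_of_Pstep_ne_zero h0)
    have := G.mem_ball_nat.1 hu
    have : G.gdist x u ≤ G.gdist x y + G.gdist y u := hconn.dist_triangle
    exact hmem_s.2 (by omega)
  have hx : x ∈ t := hmem_t.2 (by simpa [gdist] using hR)
  simpa [mexit, t, s] using G.meanExit_add_le_of_subset hconn hts _ hc hx

theorem Fm_add_le [Infinite V] (hconn : G.toSimpleGraph.Connected) {R S : ℕ} (hR : 0 < R)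
    (hS : 0 < S) : G.Fm R + G.Fm S ≤ G.Fm (R + S) :=
  le_ciInf fun x =>
    (add_le_add_left (G.Fm_le_mexit R x) _).trans (G.mexit_add_Fm_le hconn x hR hS)

end WeightedGraph

open WeightedGraph

theorem F_superadditive_general {V : Type*} [Infinite V]
    (G : WeightedGraph V) (hconn : G.toSimpleGraph.Connected) :
    (∀ R S : ℕ, 0 < S → S < R → G.Fm R + G.Fm S ≤ G.Fm (R + S)) ∧
    (∀ L R : ℕ, (L : ℝ) * G.Fm R ≤ G.Fm (L * R)) := by
  refine ⟨fun R S hS hSR => G.Fm_add_le hconn (hS.trans hSR) hS, fun L R => ?_⟩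
  induction L with
  | zero => simpa using G.Fm_nonneg 0
  | succ L ih =>
    rcases Nat.eq_zero_or_pos R with rfl | hR
    · simp [G.Fm_zero]
    rcases Nat.eq_zero_or_pos L with rfl | hL
    · simp
    calc ((L + 1 : ℕ) : ℝ) * G.Fm R = L * G.Fm R + G.Fm R := by push_cast; ring
      _ ≤ G.Fm (L * R) + G.Fm R := by gcongr
      _ ≤ G.Fm ((L + 1) * R) := by
        rw [Nat.succ_mul]
        exact G.Fm_add_le hconn (Nat.mul_pos hL hR) hR

/-- **Corollary 4.6.** Under `(E)`, the function `F(R) = inf_x E(x,R)` is superadditive,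
and consequently `F(L·R) ≥ L·F(R)`. -/
theorem F_superadditive {V : Type*} [Countable V] [Infinite V]
    (G : WeightedGraph V) (hconn : G.toSimpleGraph.Connected)
    (hE : G.UniformE) :
    (∀ R S : ℕ, 0 < S → S < R → G.Fm R + G.Fm S ≤ G.Fm (R + S)) ∧
    (∀ L R : ℕ, (L : ℝ) * G.Fm R ≤ G.Fm (L * R)) :=
  F_superadditive_general G hconn
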